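/- arXiv:1402.3617 — 2 statements merged into one kernel-verified Lean document; each statement's English description precedes it below -/
import Mathlib

section
/- Let β > 0 and s ≥ 1. Let Λ ⊆ Λ_s := {−s,…,s} be finite and for each y ∈ Λ let F_y, G_y ∈ L²(ℙ⋆_β) be cylinder functions, and set φ := Σ_{y∈Λ} ( ∇_y F_y + ∇_{y,y+1} G_y ), assumed measurable with respect to {(m_z, ω_z) : z ∈ Λ_s}. Set K := (2s+1)·( √(2/γ)·sup_{y∈Λ} ‖F_y‖_{L²(ℙ⋆_β)} + √(2/λ)·sup_{y∈Λ} ‖G_y‖_{L²(ℙ⋆_β)} ). Then for every integer ℓ ≥ s+1, writing ℓ_φ := ℓ − s − 1, and for every h ∈ L²(ℙ⋆_β) measurable with respect to {(m_z, ω_z) : z ∈ Λ_ℓ}: | 𝔼⋆_β[ (Σ_{|x| ≤ ℓ_φ} τ_x φ) · h ] | ≤ K · (2ℓ_φ + 1)^{1/2} · ( D_ℓ(ℙ⋆_β; h) )^{1/2}, where D_ℓ(ℙ⋆_β; h) := Σ_{x∈Λ_ℓ} { (γ/2)𝔼⋆_β[(∇_x h)²] + (λ/2)𝔼⋆_β[(∇_{x,x+1}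 h)²] }. -/
open MeasureTheory ProbabilityTheory Filter

noncomputable section

/-- Flip of the coordinate at site `x`. -/
def flipAt (x : ℤ) (ω : ℤ → ℝ) : ℤ → ℝ := Function.update ω x (-(ω x))

/-- Exchange of the coordinates at sites `x` and `x+1`. -/
def exchAt (x : ℤ) (ω : ℤ → ℝ) : ℤ → ℝ :=
  fun z => if z = x then ω (x + 1) else if z = x + 1 then ω x else ω z

/-- Translation by `x` of a function of the disorder and the configuration. -/
def tau (x : ℤ) (f : (ℤ → ℝ) → (ℤ → ℝ) → ℝ) : (ℤ → ℝ) → (ℤ → ℝ) → ℝ :=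
  fun m ω => f (fun z => m (x + z)) (fun z => ω (x + z))

/-- Antisymmetric (Hamiltonian) part `A^m` of the generator (the sum has finitely
many nonzero terms on cylinder functions). -/
def Agen (f : (ℤ → ℝ) → (ℤ → ℝ) → ℝ) : (ℤ → ℝ) → (ℤ → ℝ) → ℝ :=
  fun m ω => ∑' x : ℤ,
    (ω (x + 1) / Real.sqrt (m x * m (x + 1)) - ω (x - 1) / Real.sqrt (m (x - 1) * m x)) *
      deriv (fun t => f m (Function.update ω x t)) (ω x)

/-- Flip part of the noise. -/
def Sflip (f : (ℤ → ℝ) → (ℤ → ℝ) → ℝ) : (ℤ → ℝ) → (ℤ → ℝ) → ℝ :=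
  fun m ω => ∑' x : ℤ, (f m (flipAt x ω) - f m ω)

/-- Exchange part of the noise. -/
def Sexch (f : (ℤ → ℝ) → (ℤ → ℝ) → ℝ) : (ℤ → ℝ) → (ℤ → ℝ) → ℝ :=
  fun m ω => ∑' x : ℤ, (f m (exchAt x ω) - f m ω)

/-- Symmetric part `S = γ S^flipAt + λ S^exchAt` of the generator. -/
def Sgen (gam lam : ℝ) (f : (ℤ → ℝ) → (ℤ → ℝ) → ℝ) : (ℤ → ℝ) → (ℤ → ℝ) → ℝ :=
  fun m ω => gam * Sflip f m ω + lam * Sexch f m ω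

/-- The full generator `L^m = A^m + γ S^flipAt + λ S^exchAt`. -/
def Lgen (gam lam : ℝ) (f : (ℤ → ℝ) → (ℤ → ℝ) → ℝ) : (ℤ → ℝ) → (ℤ → ℝ) → ℝ :=
  fun m ω => Agen f m ω + Sgen gam lam f m ω

/-- `f` depends only on the coordinates (disorder and configuration) in `s`. -/
def CylOn (f : (ℤ → ℝ) → (ℤ → ℝ) → ℝ) (s : Finset ℤ) : Prop :=
  ∀ m ω m' ω', (∀ z ∈ s, m z = m' z) → (∀ z ∈ s, ω z = ω' z) → f m ω = f m' ω'

/-- The class `Q` of quadratic cylinder functions. -/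
structure Quad where
  ψ : ℤ → ℤ → (ℤ → ℝ) → ℝ
  symm : ∀ i j, ψ i j = ψ j i
  finsupp : {p : ℤ × ℤ | ψ p.1 p.2 ≠ 0}.Finite
  meas : ∀ i j, Measurable (ψ i j)
  bdd : ∀ i j, ∃ K : ℝ, ∀ m, |ψ i j m| ≤ K
  cyl : ∀ i j, ∃ s : Finset ℤ, ∀ m m', (∀ z ∈ s, m z = m' z) → ψ i j m = ψ i j m'

/-- Evaluation of an element of `Q`:
`f(m,ω) = Σ_i ψ_{i,i}(m)(ω_{i+1}² − ω_i²) + Σ_{i≠j} ψ_{i,j}(m) ω_i ω_j`. -/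
def Quad.eval (f : Quad) : (ℤ → ℝ) → (ℤ → ℝ) → ℝ :=
  fun m ω => ∑' p : ℤ × ℤ,
    if p.1 = p.2 then f.ψ p.1 p.1 m * (ω (p.1 + 1) ^ 2 - ω p.1 ^ 2)
    else f.ψ p.1 p.2 m * (ω p.1 * ω p.2)

/-- Expectation `𝔼⋆` with respect to `ℙ⋆ = P ⊗ μ`. -/
def Estar (P μ : Measure (ℤ → ℝ)) (f : (ℤ → ℝ) → (ℤ → ℝ) → ℝ) : ℝ :=
  ∫ p, f p.1 p.2 ∂(P.prod μ)

/-- `≪f, g≫_⋆ = Σ_{x∈ℤ} 𝔼⋆[f · τ_x g]`. -/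
def innerStar (P μ : Measure (ℤ → ℝ)) (f g : (ℤ → ℝ) → (ℤ → ℝ) → ℝ) : ℝ :=
  ∑' x : ℤ, Estar P μ (fun m ω => f m ω * tau x g m ω)

/-- `≪f≫_⋆⋆ = Σ_{x∈ℤ} x · 𝔼⋆[f · ω_x²]`. -/
def starstar (P μ : Measure (ℤ → ℝ)) (f : (ℤ → ℝ) → (ℤ → ℝ) → ℝ) : ℝ :=
  ∑' x : ℤ, (x : ℝ) * Estar P μ (fun m ω => f m ω * ω x ^ 2)

/-- `∇₀(Γ_g) = Σ_{x∈ℤ} ∇₀(τ_x g)`. -/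
def grad0Gamma (g : (ℤ → ℝ) → (ℤ → ℝ) → ℝ) : (ℤ → ℝ) → (ℤ → ℝ) → ℝ :=
  fun m ω => ∑' x : ℤ, (tau x g m (flipAt 0 ω) - tau x g m ω)

/-- `∇_{0,1}(Γ_g) = Σ_{x∈ℤ} ∇_{0,1}(τ_x g)`. -/
def grad01Gamma (g : (ℤ → ℝ) → (ℤ → ℝ) → ℝ) : (ℤ → ℝ) → (ℤ → ℝ) → ℝ :=
  fun m ω => ∑' x : ℤ, (tau x g m (exchAt 0 ω) - tau x g m ω)

/-- The seminorm `⦀φ⦀₁²`, defined through a variational formula. -/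
def norm1sq (P μ : Measure (ℤ → ℝ)) (gam lam : ℝ) (φ : (ℤ → ℝ) → (ℤ → ℝ) → ℝ) : ℝ :=
  sSup { v : ℝ | ∃ (g : Quad) (a : ℝ),
    v = 2 * innerStar P μ φ g.eval + 2 * a * starstar P μ φ
      - gam / 2 * Estar P μ (fun m ω => grad0Gamma g.eval m ω ^ 2)
      - lam / 2 * Estar P μ (fun m ω => (a * (ω 1 ^ 2 - ω 0 ^ 2) + grad01Gamma g.eval m ω) ^ 2) }

/-- The seminorm `⦀φ⦀₁`. -/
def norm1 (P μ : Measure (ℤ → ℝ)) (gam lam : ℝ) (φ : (ℤ → ℝ) → (ℤ → ℝ) → ℝ) : ℝ :=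
  Real.sqrt (norm1sq P μ gam lam φ)

/-- Antisymmetric part of the energy current: `j^A_{0,1}(m,ω) = 2ω₀ω₁/√(m₀m₁)`. -/
def jA : (ℤ → ℝ) → (ℤ → ℝ) → ℝ := fun m ω => 2 * ω 0 * ω 1 / Real.sqrt (m 0 * m 1)

/-- Symmetric part of the energy current: `j^S_{0,1}(ω) = λ(ω₁² − ω₀²)`. -/
def jS (lam : ℝ) : (ℤ → ℝ) → (ℤ → ℝ) → ℝ := fun _ ω => lam * (ω 1 ^ 2 - ω 0 ^ 2)

/-- The energy current `j_{0,1} = j^A_{0,1} + j^S_{0,1}`. -/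
def jcur (lam : ℝ) : (ℤ → ℝ) → (ℤ → ℝ) → ℝ := fun m ω => jA m ω + jS lam m ω

/-- `μ` is the i.i.d. product over `ℤ` of the one-site measure `κ`:
all finite-dimensional marginals of `μ` are finite products of `κ`. -/
def IsIIDProduct (μ : Measure (ℤ → ℝ)) (κ : Measure ℝ) : Prop :=
  ∀ s : Finset ℤ, μ.map (fun ω (i : s) => ω i.1) = Measure.pi (fun _ : s => κ)

/-!
Expanding `τ_x φ` gives a sum over `y ∈ Λ` of the gradients `∇_{x+y}(τ_x F_y)` and
`∇_{x+y,x+y+1}(τ_x G_y)`. Flips and exchanges are measure-preserving involutions of `ℙ ⊗ μ_β`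
(the Gaussian is symmetric and both measures are i.i.d.), so a gradient can be moved onto `h`:
`𝔼⋆[(∇_z f) h] = 𝔼⋆[f ∇_z h]`. By Cauchy–Schwarz and translation invariance each term is then at
most `‖F_y‖ ‖∇_{x+y} h‖`. Cauchy–Schwarz in `x` turns the sum over the `2ℓ_φ + 1` translates into
`(2ℓ_φ + 1)^{1/2} (Σ_{z ∈ Λ_ℓ} ‖∇_z h‖²)^{1/2}`, and there are at most `2s + 1` sites `y`.
-/

open Finset

theorem flipAt_involutive (x : ℤ) : Function.Involutive (flipAt x) := fun ω => by
  ext z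
  by_cases hz : z = x <;> simp [flipAt, hz]

theorem exchAt_involutive (x : ℤ) : Function.Involutive (exchAt x) := fun ω => by
  ext z
  by_cases h₀ : z = x <;> by_cases h₁ : z = x + 1 <;> simp [exchAt, h₀, h₁]

theorem flipAt_shift (x y : ℤ) (ω : ℤ → ℝ) :
    flipAt y (fun z => ω (x + z)) = fun z => flipAt (x + y) ω (x + z) := by
  ext z
  by_cases hz : z = y <;> simp [flipAt, hz]

theorem exchAt_shift (x y : ℤ) (ω : ℤ → ℝ) :
    exchAt y (fun z => ω (x + z)) = fun z => exchAt (x + y) ω (x + z) := by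
  ext z
  by_cases h₀ : z = y <;> by_cases h₁ : z = y + 1 <;> simp [exchAt, h₀, h₁, add_assoc]

theorem gaussianReal_zero_map_neg (v : NNReal) :
    (gaussianReal 0 v).map Neg.neg = gaussianReal 0 v := by
  simpa using gaussianReal_map_neg (μ := 0) (v := v)

namespace IsIIDProduct

variable {μ : Measure (ℤ → ℝ)} {κ : Measure ℝ} [IsProbabilityMeasure κ]

theorem eq_infinitePi (hμ : IsIIDProduct μ κ) : μ = Measure.infinitePi fun _ : ℤ => κ :=
  IsProjectiveLimit.unique hμ (Measure.isProjectiveLimit_infinitePi _)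

theorem isProbabilityMeasure (hμ : IsIIDProduct μ κ) : IsProbabilityMeasure μ :=
  hμ.eq_infinitePi ▸ inferInstance

theorem measurePreserving_comp_equiv (hμ : IsIIDProduct μ κ) (e : ℤ ≃ ℤ) :
    MeasurePreserving (fun ω z => ω (e z)) μ μ := by
  obtain rfl := hμ.eq_infinitePi
  refine ⟨by fun_prop, ?_⟩
  have hreindex : ⇑(Equiv.piCongrLeft (fun _ : ℤ => ℝ) e.symm) = fun ω z => ω (e z) := by
    ext ω z
    simp [Equiv.piCongrLeft_apply, eq_rec_constant]
  simpa [MeasurableEquiv.coe_piCongrLeft, hreindex] using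
    Measure.infinitePi_map_piCongrLeft (fun _ : ℤ => κ) e.symm

theorem measurePreserving_update (hμ : IsIIDProduct μ κ) (x : ℤ) {f : ℝ → ℝ}
    (hf : Measurable f) (hκ : κ.map f = κ) :
    MeasurePreserving (fun ω => Function.update ω x (f (ω x))) μ μ := by
  obtain rfl := hμ.eq_infinitePi
  classical
  have hupdate : (fun ω : ℤ → ℝ => Function.update ω x (f (ω x)))
      = fun ω z => (if z = x then f else id) (ω z) := by
    ext ω z
    by_cases hz : z = x <;> simp [hz]
  have hmeas : ∀ z, Measurable (if z = x then f else id) := fun z => by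
    split_ifs <;> fun_prop
  refine ⟨by rw [hupdate]; fun_prop, ?_⟩
  rw [hupdate, Measure.infinitePi_map_pi _ hmeas]
  congr with z : 1
  split_ifs
  · exact hκ
  · exact Measure.map_id

theorem measurePreserving_flipAt (hμ : IsIIDProduct μ κ) (hκ : κ.map Neg.neg = κ) (x : ℤ) :
    MeasurePreserving (flipAt x) μ μ :=
  hμ.measurePreserving_update x measurable_neg hκ

theorem measurePreserving_exchAt (hμ : IsIIDProduct μ κ) (x : ℤ) :
    MeasurePreserving (exchAt x) μ μ := by
  convert hμ.measurePreserving_comp_equiv (Equiv.swap x (x + 1)) using 1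
  ext ω z
  by_cases h₀ : z = x <;> by_cases h₁ : z = x + 1 <;> simp [exchAt, Equiv.swap_apply_def, h₀, h₁]

theorem measurePreserving_shift (hμ : IsIIDProduct μ κ) (x : ℤ) :
    MeasurePreserving (fun ω z => ω (x + z)) μ μ :=
  hμ.measurePreserving_comp_equiv (Equiv.addLeft x)

end IsIIDProduct

section L2

variable {α : Type*} [MeasurableSpace α] {ρ : Measure α} {f g : α → ℝ}

theorem MeasureTheory.MemLp.toReal_eLpNorm_two (hf : MemLp f 2 ρ) :
    (eLpNorm f 2 ρ).toReal = √(∫ a, f a ^ 2 ∂ρ) := by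
  rw [hf.eLpNorm_eq_integral_rpow_norm two_ne_zero ENNReal.ofNat_ne_top,
    ENNReal.toReal_ofReal (by positivity), Real.sqrt_eq_rpow]
  norm_num [Real.norm_eq_abs, sq_abs]

theorem abs_integral_mul_le_eLpNorm_mul_eLpNorm (hf : MemLp f 2 ρ) (hg : MemLp g 2 ρ) :
    |∫ a, f a * g a ∂ρ| ≤ (eLpNorm f 2 ρ).toReal * (eLpNorm g 2 ρ).toReal := by
  have hinner : inner ℝ (hf.toLp f) (hg.toLp g) = ∫ a, f a * g a ∂ρ := by
    rw [L2.inner_def]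
    refine integral_congr_ae ?_
    filter_upwards [hf.coeFn_toLp, hg.coeFn_toLp] with a hfa hga
    simp [hfa, hga, mul_comm]
  rw [← hinner, ← Lp.norm_toLp f hf, ← Lp.norm_toLp g hg]
  exact abs_real_inner_le_norm _ _

theorem integral_comp_mul_eq_integral_mul_comp {Φ : α → α} (hΦ : MeasurePreserving Φ ρ ρ)
    (hinv : Function.Involutive Φ) (f g : α → ℝ) :
    ∫ a, f (Φ a) * g a ∂ρ = ∫ a, f a * g (Φ a) ∂ρ := by
  simpa only [MeasurableEquiv.ofInvolutive_apply, hinv _] using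
    MeasurePreserving.integral_comp' (f := MeasurableEquiv.ofInvolutive Φ hinv hΦ.measurable)
      hΦ fun a => f a * g (Φ a)

theorem abs_integral_sub_comp_mul_le {Φ : α → α} (hΦ : MeasurePreserving Φ ρ ρ)
    (hinv : Function.Involutive Φ) (hf : MemLp f 2 ρ) (hg : MemLp g 2 ρ) :
    |∫ a, (f (Φ a) - f a) * g a ∂ρ|
      ≤ (eLpNorm f 2 ρ).toReal * √(∫ a, (g (Φ a) - g a) ^ 2 ∂ρ) := by
  have hfΦ : MemLp (fun a => f (Φ a)) 2 ρ := hf.comp_measurePreserving hΦ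
  have hgΦ : MemLp (fun a => g (Φ a)) 2 ρ := hg.comp_measurePreserving hΦ
  have hgrad : MemLp (fun a => g (Φ a) - g a) 2 ρ := hgΦ.sub hg
  have hmul : ∀ {u v : α → ℝ}, MemLp u 2 ρ → MemLp v 2 ρ → Integrable (fun a => u a * v a) ρ :=
    fun hu hv => hu.integrable_mul hv
  have hmoved : ∫ a, (f (Φ a) - f a) * g a ∂ρ = ∫ a, f a * (g (Φ a) - g a) ∂ρ := by
    simp only [sub_mul, mul_sub]
    rw [integral_sub (hmul hfΦ hg) (hmul hf hg), integral_sub (hmul hf hgΦ) (hmul hf hg),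
      integral_comp_mul_eq_integral_mul_comp hΦ hinv]
  rw [hmoved, ← hgrad.toReal_eLpNorm_two]
  exact abs_integral_mul_le_eLpNorm_mul_eLpNorm hf hgrad

theorem integral_sum_sum_add {α ι κ : Type*} [MeasurableSpace α] {ρ : Measure α}
    {I : Finset ι} {J : Finset κ} {u v : ι → κ → α → ℝ}
    (hu : ∀ i ∈ I, ∀ j ∈ J, Integrable (u i j) ρ) (hv : ∀ i ∈ I, ∀ j ∈ J, Integrable (v i j) ρ) :
    ∫ a, ∑ i ∈ I, ∑ j ∈ J, (u i j a + v i j a) ∂ρ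
      = ∑ i ∈ I, ∑ j ∈ J, ((∫ a, u i j a ∂ρ) + ∫ a, v i j a ∂ρ) := by
  have huv : ∀ i ∈ I, ∀ j ∈ J, Integrable (fun a => u i j a + v i j a) ρ :=
    fun i hi j hj => (hu i hi j hj).add (hv i hi j hj)
  rw [integral_finsetSum _ fun i hi => integrable_finsetSum _ (huv i hi)]
  refine Finset.sum_congr rfl fun i hi => ?_
  rw [integral_finsetSum _ (huv i hi)]
  exact Finset.sum_congr rfl fun j hj => integral_add (hu i hi j hj) (hv i hi j hj)

end L2

/-- `grad (flipAt x)` is the paper's `∇_x` and `grad (exchAt x)` its `∇_{x,x+1}`. -/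
def grad (T : (ℤ → ℝ) → ℤ → ℝ) (f : (ℤ → ℝ) → (ℤ → ℝ) → ℝ) : (ℤ → ℝ) → (ℤ → ℝ) → ℝ :=
  fun m ω => f m (T ω) - f m ω

theorem tau_grad {T : ℤ → (ℤ → ℝ) → ℤ → ℝ}
    (hT : ∀ x y ω, T y (fun z => ω (x + z)) = fun z => T (x + y) ω (x + z))
    (x y : ℤ) (f : (ℤ → ℝ) → (ℤ → ℝ) → ℝ) :
    tau x (grad (T y) f) = grad (T (x + y)) (tau x f) := by
  ext m ω
  simp only [tau, grad, hT]

section ProductMeasure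

variable {P μ : Measure (ℤ → ℝ)} [SFinite P] [SFinite μ] {f h : (ℤ → ℝ) → (ℤ → ℝ) → ℝ}

theorem measurePreserving_prodMap_shift (hP : ∀ x, MeasurePreserving (fun m z => m (x + z)) P P)
    (hμ : ∀ x, MeasurePreserving (fun ω z => ω (x + z)) μ μ) (x : ℤ) :
    MeasurePreserving (fun p : (ℤ → ℝ) × (ℤ → ℝ) => ((fun z => p.1 (x + z)), fun z => p.2 (x + z)))
      (P.prod μ) (P.prod μ) :=
  (hP x).prod (hμ x)

theorem memLp_uncurry_tau (hP : ∀ x, MeasurePreserving (fun m z => m (x + z)) P P)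
    (hμ : ∀ x, MeasurePreserving (fun ω z => ω (x + z)) μ μ)
    (hf : MemLp (Function.uncurry f) 2 (P.prod μ)) (x : ℤ) :
    MemLp (Function.uncurry (tau x f)) 2 (P.prod μ) :=
  (hf.comp_measurePreserving (measurePreserving_prodMap_shift hP hμ x) :)

theorem eLpNorm_uncurry_tau (hP : ∀ x, MeasurePreserving (fun m z => m (x + z)) P P)
    (hμ : ∀ x, MeasurePreserving (fun ω z => ω (x + z)) μ μ)
    (hf : MemLp (Function.uncurry f) 2 (P.prod μ)) (x : ℤ) :
    eLpNorm (Function.uncurry (tau x f)) 2 (P.prod μ)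
      = eLpNorm (Function.uncurry f) 2 (P.prod μ) :=
  (eLpNorm_comp_measurePreserving hf.1 (measurePreserving_prodMap_shift hP hμ x) :)

theorem memLp_uncurry_grad {T : (ℤ → ℝ) → ℤ → ℝ} (hT : MeasurePreserving T μ μ)
    (hf : MemLp (Function.uncurry f) 2 (P.prod μ)) :
    MemLp (Function.uncurry (grad T f)) 2 (P.prod μ) :=
  (hf.comp_measurePreserving ((MeasurePreserving.id P).prod hT)).sub hf

theorem abs_estar_grad_mul_le {T : (ℤ → ℝ) → ℤ → ℝ} (hT : MeasurePreserving T μ μ)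
    (hTinv : Function.Involutive T) (hf : MemLp (Function.uncurry f) 2 (P.prod μ))
    (hh : MemLp (Function.uncurry h) 2 (P.prod μ)) :
    |Estar P μ (fun m ω => grad T f m ω * h m ω)|
      ≤ (eLpNorm (Function.uncurry f) 2 (P.prod μ)).toReal
        * √(Estar P μ (fun m ω => grad T h m ω ^ 2)) :=
  abs_integral_sub_comp_mul_le ((MeasurePreserving.id P).prod hT)
    (fun p => Prod.ext rfl (hTinv p.2)) hf hh

theorem abs_estar_tau_grad_mul_le (hP : ∀ x, MeasurePreserving (fun m z => m (x + z)) P P)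
    (hμ : ∀ x, MeasurePreserving (fun ω z => ω (x + z)) μ μ) {T : ℤ → (ℤ → ℝ) → ℤ → ℝ}
    (hT : ∀ z, MeasurePreserving (T z) μ μ) (hTinv : ∀ z, Function.Involutive (T z))
    (hTshift : ∀ x y ω, T y (fun z => ω (x + z)) = fun z => T (x + y) ω (x + z))
    (hf : MemLp (Function.uncurry f) 2 (P.prod μ)) (hh : MemLp (Function.uncurry h) 2 (P.prod μ))
    (x y : ℤ) :
    |Estar P μ (fun m ω => tau x (grad (T y) f) m ω * h m ω)|
      ≤ (eLpNorm (Function.uncurry f) 2 (P.prod μ)).toReal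
        * √(Estar P μ (fun m ω => grad (T (x + y)) h m ω ^ 2)) := by
  rw [tau_grad hTshift, ← eLpNorm_uncurry_tau hP hμ hf x]
  exact abs_estar_grad_mul_le (hT _) (hTinv _) (memLp_uncurry_tau hP hμ hf x) hh

end ProductMeasure

theorem sum_sqrt_comp_add_le {I L : Finset ℤ} {y : ℤ} (hIL : ∀ x ∈ I, x + y ∈ L)
    {A : ℤ → ℝ} (hA : ∀ z, 0 ≤ A z) :
    ∑ x ∈ I, √(A (x + y)) ≤ √(#I : ℝ) * √(∑ z ∈ L, A z) := by
  have hshifted : ∑ x ∈ I, A (x + y) ≤ ∑ z ∈ L, A z :=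
    calc ∑ x ∈ I, A (x + y) = ∑ z ∈ I.map (addRightEmbedding y), A z := by simp
      _ ≤ ∑ z ∈ L, A z := sum_le_sum_of_subset_of_nonneg (by simpa [subset_iff] using hIL)
          fun z _ _ => hA z
  calc ∑ x ∈ I, √(A (x + y)) = ∑ x ∈ I, 1 * √(A (x + y)) := by simp
    _ ≤ √(∑ x ∈ I, (1 : ℝ) ^ 2) * √(∑ x ∈ I, √(A (x + y)) ^ 2) :=
        Real.sum_mul_le_sqrt_mul_sqrt _ _ _
    _ ≤ √(#I : ℝ) * √(∑ z ∈ L, A z) := by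
        simp only [one_pow, sum_const, nsmul_eq_mul, mul_one, Real.sq_sqrt (hA _)]
        gcongr

theorem abs_sum_sum_le_of_abs_le {I Λ L : Finset ℤ} (hsub : ∀ x ∈ I, ∀ y ∈ Λ, x + y ∈ L)
    {c : ℤ → ℤ → ℝ} {A B : ℤ → ℝ} (hA : ∀ z, 0 ≤ A z) (hB : ∀ z, 0 ≤ B z) {a b : ℝ}
    (ha : 0 ≤ a) (hb : 0 ≤ b)
    (hc : ∀ x ∈ I, ∀ y ∈ Λ, |c x y| ≤ a * √(A (x + y)) + b * √(B (x + y))) :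
    |∑ x ∈ I, ∑ y ∈ Λ, c x y|
      ≤ #Λ * √(#I : ℝ) * (a * √(∑ z ∈ L, A z) + b * √(∑ z ∈ L, B z)) := by
  have hcol : ∀ y ∈ Λ, ∑ x ∈ I, (a * √(A (x + y)) + b * √(B (x + y)))
      ≤ √(#I : ℝ) * (a * √(∑ z ∈ L, A z) + b * √(∑ z ∈ L, B z)) := fun y hy => by
    have hIL : ∀ x ∈ I, x + y ∈ L := fun x hx => hsub x hx y hy
    rw [sum_add_distrib, ← mul_sum, ← mul_sum, mul_add, mul_left_comm, mul_left_comm _ b]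
    exact add_le_add (mul_le_mul_of_nonneg_left (sum_sqrt_comp_add_le hIL hA) ha)
      (mul_le_mul_of_nonneg_left (sum_sqrt_comp_add_le hIL hB) hb)
  calc |∑ x ∈ I, ∑ y ∈ Λ, c x y| ≤ ∑ x ∈ I, ∑ y ∈ Λ, |c x y| :=
        (abs_sum_le_sum_abs _ _).trans (sum_le_sum fun x _ =>
          abs_sum_le_sum_abs _ _)
    _ ≤ ∑ y ∈ Λ, ∑ x ∈ I, (a * √(A (x + y)) + b * √(B (x + y))) := by
        rw [sum_comm]
        exact sum_le_sum fun y hy => sum_le_sum fun x hx => hc x hx y hy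
    _ ≤ #Λ * (√(#I : ℝ) * (a * √(∑ z ∈ L, A z) + b * √(∑ z ∈ L, B z))) := by
        simpa using sum_le_card_nsmul Λ _ _ hcol
    _ = _ := by ring

theorem sqrt_le_sqrt_two_div_mul_sqrt {c a d : ℝ} (hc : 0 < c) (h : c / 2 * a ≤ d) :
    √a ≤ √(2 / c) * √d := by
  rw [← Real.sqrt_mul (by positivity)]
  refine Real.sqrt_le_sqrt ?_
  rw [div_mul_eq_mul_div, le_div_iff₀ hc]
  linarith

theorem card_Icc_neg_self {n : ℤ} (hn : 0 ≤ n) : (#(Icc (-n) n) : ℝ) = ((2 * n + 1 : ℤ) : ℝ) := by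
  rw [Int.card_Icc]
  norm_cast
  omega

theorem toReal_le_biSup_toReal {ι : Type*} (c : ι → ENNReal) {s : Finset ι} {i : ι}
    (hi : i ∈ s) : (c i).toReal ≤ ⨆ j ∈ s, (c j).toReal := by
  have hbdd : BddAbove (Set.range fun j => ⨆ _ : j ∈ s, (c j).toReal) :=
    ⟨∑ j ∈ s, (c j).toReal, by
      rintro _ ⟨j, rfl⟩
      exact Real.iSup_le (fun hj => single_le_sum (fun k _ => ENNReal.toReal_nonneg) hj)
        (sum_nonneg fun k _ => ENNReal.toReal_nonneg)⟩
  calc (c i).toReal = ⨆ _ : i ∈ s, (c i).toReal := (ciSup_pos (f := fun _ => (c i).toReal) hi).symm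
    _ ≤ ⨆ j ∈ s, (c j).toReal := le_ciSup hbdd i

theorem biSup_toReal_nonneg {ι : Type*} (c : ι → ENNReal) (s : Finset ι) :
    0 ≤ ⨆ j ∈ s, (c j).toReal :=
  Real.iSup_nonneg fun _ => Real.iSup_nonneg fun _ => ENNReal.toReal_nonneg

theorem mul_sqrt_sum_add_mul_sqrt_sum_le {ι : Type*} (L : Finset ι) {A B : ι → ℝ}
    (hA : ∀ z, 0 ≤ A z) (hB : ∀ z, 0 ≤ B z) {c d a b : ℝ} (hc : 0 < c) (hd : 0 < d)
    (ha : 0 ≤ a) (hb : 0 ≤ b) :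
    a * √(∑ z ∈ L, A z) + b * √(∑ z ∈ L, B z)
      ≤ (√(2 / c) * a + √(2 / d) * b) * √(∑ z ∈ L, (c / 2 * A z + d / 2 * B z)) := by
  have hAD : √(∑ z ∈ L, A z) ≤ √(2 / c) * √(∑ z ∈ L, (c / 2 * A z + d / 2 * B z)) :=
    sqrt_le_sqrt_two_div_mul_sqrt hc <| by
      rw [mul_sum]
      exact sum_le_sum fun z _ => le_add_of_nonneg_right (mul_nonneg (by positivity) (hB z))
  have hBD : √(∑ z ∈ L, B z) ≤ √(2 / d) * √(∑ z ∈ L, (c / 2 * A z + d / 2 * B z)) :=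
    sqrt_le_sqrt_two_div_mul_sqrt hd <| by
      rw [mul_sum]
      exact sum_le_sum fun z _ => le_add_of_nonneg_left (mul_nonneg (by positivity) (hA z))
  exact (add_le_add (mul_le_mul_of_nonneg_left hAD ha)
    (mul_le_mul_of_nonneg_left hBD hb)).trans_eq (by ring)

section Dirichlet

variable {P μ : Measure (ℤ → ℝ)} [SFinite P] [SFinite μ]

theorem abs_estar_sum_tau_mul_le (hP : ∀ x, MeasurePreserving (fun m z => m (x + z)) P P)
    (hμ : ∀ x, MeasurePreserving (fun ω z => ω (x + z)) μ μ)
    (hflip : ∀ x, MeasurePreserving (flipAt x) μ μ) (hexch : ∀ x, MeasurePreserving (exchAt x) μ μ)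
    {I Λ L : Finset ℤ} (hsub : ∀ x ∈ I, ∀ y ∈ Λ, x + y ∈ L) {F G : ℤ → (ℤ → ℝ) → (ℤ → ℝ) → ℝ}
    (hF : ∀ y ∈ Λ, MemLp (Function.uncurry (F y)) 2 (P.prod μ))
    (hG : ∀ y ∈ Λ, MemLp (Function.uncurry (G y)) 2 (P.prod μ))
    {h : (ℤ → ℝ) → (ℤ → ℝ) → ℝ} (hh : MemLp (Function.uncurry h) 2 (P.prod μ)) :
    |Estar P μ (fun m ω => (∑ x ∈ I, tau x (fun m ω =>
        ∑ y ∈ Λ, (grad (flipAt y) (F y) m ω + grad (exchAt y) (G y) m ω)) m ω) * h m ω)|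
      ≤ #Λ * √(#I : ℝ) *
        ((⨆ y ∈ Λ, (eLpNorm (Function.uncurry (F y)) 2 (P.prod μ)).toReal)
            * √(∑ z ∈ L, Estar P μ (fun m ω => grad (flipAt z) h m ω ^ 2))
          + (⨆ y ∈ Λ, (eLpNorm (Function.uncurry (G y)) 2 (P.prod μ)).toReal)
            * √(∑ z ∈ L, Estar P μ (fun m ω => grad (exchAt z) h m ω ^ 2))) := by
  have hintegrable : ∀ {T : ℤ → (ℤ → ℝ) → ℤ → ℝ} {f : (ℤ → ℝ) → (ℤ → ℝ) → ℝ},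
      (∀ z, MeasurePreserving (T z) μ μ) → MemLp (Function.uncurry f) 2 (P.prod μ) →
      ∀ x y, Integrable (fun p : (ℤ → ℝ) × (ℤ → ℝ) => tau x (grad (T y) f) p.1 p.2 * h p.1 p.2)
        (P.prod μ) := fun hT hf x y =>
    (memLp_uncurry_tau hP hμ (memLp_uncurry_grad (hT y) hf) x).integrable_mul hh
  have hexpand : Estar P μ (fun m ω => (∑ x ∈ I, tau x (fun m ω =>
        ∑ y ∈ Λ, (grad (flipAt y) (F y) m ω + grad (exchAt y) (G y) m ω)) m ω) * h m ω)
      = ∑ x ∈ I, ∑ y ∈ Λ, (Estar P μ (fun m ω => tau x (grad (flipAt y) (F y)) m ω * h m ω)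
        + Estar P μ (fun m ω => tau x (grad (exchAt y) (G y)) m ω * h m ω)) := by
    simp only [Estar, tau, sum_mul, add_mul]
    exact integral_sum_sum_add (fun x _ y hy => hintegrable hflip (hF y hy) x y)
      (fun x _ y hy => hintegrable hexch (hG y hy) x y)
  have hsq : ∀ T : (ℤ → ℝ) → ℤ → ℝ, 0 ≤ Estar P μ (fun m ω => grad T h m ω ^ 2) :=
    fun _ => integral_nonneg fun _ => sq_nonneg _
  rw [hexpand]
  refine abs_sum_sum_le_of_abs_le hsub (fun _ => hsq _) (fun _ => hsq _)
    (biSup_toReal_nonneg _ Λ) (biSup_toReal_nonneg _ Λ)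
    fun x _ y hy => (abs_add_le _ _).trans (add_le_add ?_ ?_)
  · refine (abs_estar_tau_grad_mul_le hP hμ hflip flipAt_involutive flipAt_shift (hF y hy) hh x
      y).trans (mul_le_mul_of_nonneg_right ?_ (Real.sqrt_nonneg _))
    exact toReal_le_biSup_toReal (fun y => eLpNorm (Function.uncurry (F y)) 2 (P.prod μ)) hy
  · refine (abs_estar_tau_grad_mul_le hP hμ hexch exchAt_involutive exchAt_shift (hG y hy) hh x
      y).trans (mul_le_mul_of_nonneg_right ?_ (Real.sqrt_nonneg _))
    exact toReal_le_biSup_toReal (fun y => eLpNorm (Function.uncurry (G y)) 2 (P.prod μ)) hy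

end Dirichlet

theorem stmt4_general (gam lam : ℝ) (hgam : 0 < gam) (hlam : 0 < lam)
    (ν : Measure ℝ) [IsProbabilityMeasure ν]
    (P : Measure (ℤ → ℝ)) (hP : IsIIDProduct P ν)
    (β : ℝ)
    (μ : Measure (ℤ → ℝ))
    (hμ : IsIIDProduct μ (gaussianReal 0 (Real.toNNReal β⁻¹)))
    (s : ℤ) (hs : 1 ≤ s)
    (Λ : Finset ℤ) (hΛ : Λ ⊆ Finset.Icc (-s) s)
    (F G : ℤ → (ℤ → ℝ) → (ℤ → ℝ) → ℝ)
    (hF2 : ∀ y ∈ Λ, MemLp (fun p : (ℤ → ℝ) × (ℤ → ℝ) => F y p.1 p.2) 2 (P.prod μ))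
    (hG2 : ∀ y ∈ Λ, MemLp (fun p : (ℤ → ℝ) × (ℤ → ℝ) => G y p.1 p.2) 2 (P.prod μ))
    (φ : (ℤ → ℝ) → (ℤ → ℝ) → ℝ)
    (hφ : φ = fun m ω => ∑ y ∈ Λ,
      ((F y m (flipAt y ω) - F y m ω) + (G y m (exchAt y ω) - G y m ω)))
    (K : ℝ)
    (hK : K = ((2 * s + 1 : ℤ) : ℝ) *
      (Real.sqrt (2 / gam) *
          (⨆ y ∈ Λ, (eLpNorm (fun p : (ℤ → ℝ) × (ℤ → ℝ) => F y p.1 p.2) 2 (P.prod μ)).toReal)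
        + Real.sqrt (2 / lam) *
          (⨆ y ∈ Λ, (eLpNorm (fun p : (ℤ → ℝ) × (ℤ → ℝ) => G y p.1 p.2) 2 (P.prod μ)).toReal)))
    (l : ℤ) (hl : s + 1 ≤ l)
    (h : (ℤ → ℝ) → (ℤ → ℝ) → ℝ)
    (hh2 : MemLp (fun p : (ℤ → ℝ) × (ℤ → ℝ) => h p.1 p.2) 2 (P.prod μ)) :
    |Estar P μ (fun m ω =>
        (∑ x ∈ Finset.Icc (-(l - s - 1)) (l - s - 1), tau x φ m ω) * h m ω)|
      ≤ K * Real.sqrt ((2 * (l - s - 1) + 1 : ℤ) : ℝ) *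
        Real.sqrt (∑ x ∈ Finset.Icc (-l) l,
          (gam / 2 * Estar P μ (fun m ω => (h m (flipAt x ω) - h m ω) ^ 2)
            + lam / 2 * Estar P μ (fun m ω => (h m (exchAt x ω) - h m ω) ^ 2))) := by
  have := hP.isProbabilityMeasure
  have := hμ.isProbabilityMeasure
  have hsub : ∀ x ∈ Icc (-(l - s - 1)) (l - s - 1), ∀ y ∈ Λ, x + y ∈ Icc (-l) l :=
    fun x hx y hy => by
      have hy' := hΛ hy
      simp only [mem_Icc] at hx hy' ⊢
      omega
  have hcard : (#Λ : ℝ) ≤ ((2 * s + 1 : ℤ) : ℝ) := by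
    rw [← card_Icc_neg_self (by omega)]
    exact_mod_cast card_le_card hΛ
  subst hφ hK
  rw [← card_Icc_neg_self (by omega : 0 ≤ l - s - 1)]
  refine (abs_estar_sum_tau_mul_le hP.measurePreserving_shift hμ.measurePreserving_shift
    (hμ.measurePreserving_flipAt (gaussianReal_zero_map_neg _)) hμ.measurePreserving_exchAt
    hsub hF2 hG2 hh2).trans ?_
  calc _ ≤ ((2 * s + 1 : ℤ) : ℝ) * √(#(Icc (-(l - s - 1)) (l - s - 1)) : ℝ) * (_ * √_) := by
        gcongr
        · exact add_nonneg (mul_nonneg (biSup_toReal_nonneg _ _) (Real.sqrt_nonneg _))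
            (mul_nonneg (biSup_toReal_nonneg _ _) (Real.sqrt_nonneg _))
        · exact mul_sqrt_sum_add_mul_sqrt_sum_le _ (fun _ => integral_nonneg fun _ => sq_nonneg _)
            (fun _ => integral_nonneg fun _ => sq_nonneg _) hgam hlam (biSup_toReal_nonneg _ _)
            (biSup_toReal_nonneg _ _)
    _ = _ := (mul_mul_mul_comm _ _ _ _).trans (mul_assoc _ _ _).symm

/-- Dirichlet bound. -/
theorem stmt4 (gam lam : ℝ) (hgam : 0 < gam) (hlam : 0 < lam)
    (C : ℝ) (hC : 1 < C)
    (ν : Measure ℝ) [IsProbabilityMeasure ν] (hν : ν (Set.Icc C⁻¹ C)ᶜ = 0)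
    (P : Measure (ℤ → ℝ)) [IsProbabilityMeasure P] (hP : IsIIDProduct P ν)
    (β : ℝ) (hβ : 0 < β)
    (μ : Measure (ℤ → ℝ)) [IsProbabilityMeasure μ]
    (hμ : IsIIDProduct μ (gaussianReal 0 (Real.toNNReal β⁻¹)))
    (s : ℤ) (hs : 1 ≤ s)
    (Λ : Finset ℤ) (hΛ : Λ ⊆ Finset.Icc (-s) s)
    (F G : ℤ → (ℤ → ℝ) → (ℤ → ℝ) → ℝ)
    (hF2 : ∀ y ∈ Λ, MemLp (fun p : (ℤ → ℝ) × (ℤ → ℝ) => F y p.1 p.2) 2 (P.prod μ))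
    (hG2 : ∀ y ∈ Λ, MemLp (fun p : (ℤ → ℝ) × (ℤ → ℝ) => G y p.1 p.2) 2 (P.prod μ))
    (hFcyl : ∀ y ∈ Λ, ∃ t : Finset ℤ, CylOn (F y) t)
    (hGcyl : ∀ y ∈ Λ, ∃ t : Finset ℤ, CylOn (G y) t)
    (φ : (ℤ → ℝ) → (ℤ → ℝ) → ℝ)
    (hφ : φ = fun m ω => ∑ y ∈ Λ,
      ((F y m (flipAt y ω) - F y m ω) + (G y m (exchAt y ω) - G y m ω)))
    (hφcyl : CylOn φ (Finset.Icc (-s) s))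
    (K : ℝ)
    (hK : K = ((2 * s + 1 : ℤ) : ℝ) *
      (Real.sqrt (2 / gam) *
          (⨆ y ∈ Λ, (eLpNorm (fun p : (ℤ → ℝ) × (ℤ → ℝ) => F y p.1 p.2) 2 (P.prod μ)).toReal)
        + Real.sqrt (2 / lam) *
          (⨆ y ∈ Λ, (eLpNorm (fun p : (ℤ → ℝ) × (ℤ → ℝ) => G y p.1 p.2) 2 (P.prod μ)).toReal)))
    (l : ℤ) (hl : s + 1 ≤ l)
    (h : (ℤ → ℝ) → (ℤ → ℝ) → ℝ)
    (hh2 : MemLp (fun p : (ℤ → ℝ) × (ℤ → ℝ) => h p.1 p.2) 2 (P.prod μ))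
    (hhcyl : CylOn h (Finset.Icc (-l) l)) :
    |Estar P μ (fun m ω =>
        (∑ x ∈ Finset.Icc (-(l - s - 1)) (l - s - 1), tau x φ m ω) * h m ω)|
      ≤ K * Real.sqrt ((2 * (l - s - 1) + 1 : ℤ) : ℝ) *
        Real.sqrt (∑ x ∈ Finset.Icc (-l) l,
          (gam / 2 * Estar P μ (fun m ω => (h m (flipAt x ω) - h m ω) ^ 2)
            + lam / 2 * Estar P μ (fun m ω => (h m (exchAt x ω) - h m ω) ^ 2))) :=
  stmt4_general gam lam hgam hlam ν P hP β μ hμ s hs Λ hΛ F G hF2 hG2 φ hφ K hK l hl h hh2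
end
end

section
/- Let β > 0, Λ ⊂ ℤ finite, and for each x ∈ Λ let F_x, G_x ∈ L²(ℙ⋆_β) be cylinder functions; set φ := Σ_{x∈Λ} ( ∇_x F_x + ∇_{x,x+1} G_x ). Then: (i) Σ_{y∈ℤ} y · 𝔼⋆_β[ φ · ω_y² ] = 𝔼⋆_β[ (ω₀² − ω₁²) · Σ_{x∈Λ} τ_{−x} G_x ]; (ii) for every cylinder function g ∈ L²(ℙ⋆_β), Σ_{z∈ℤ} 𝔼⋆_β[ φ · τ_z g ] = 𝔼⋆_β[ ∇₀(Γ_g) · Σ_{x∈Λ} τ_{−x} F_x + ∇_{0,1}(Γ_g) · Σ_{x∈Λ} τ_{−x} G_x ]. (All sums over ℤ have finitely many nonzero terms.) -/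
open MeasureTheory ProbabilityTheory Filter

/-!
Both identities are discrete integrations by parts. The flip `ω ↦ ω^x` and the exchange
`ω ↦ ω^{x,x+1}` are involutions preserving `ℙ⋆_β`, so `𝔼⋆[(∇_x F) h] = 𝔼⋆[F ∇_x h]`, and
translation invariance moves each resulting term to the origin. For (i), `∇_x (ω_y²) = 0` and
`Σ_y y ∇_{x,x+1}(ω_y²) = ω_x² − ω_{x+1}²`. For (ii), `∇_x (τ_z g)` vanishes unless `x − z` lies in
the support of `g`, so all sums over `ℤ` are finite and commute with `𝔼⋆`.
-/

namespace DisorderedChain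

section

variable {α : Type*} [MeasurableSpace α] {ρ : Measure α}

lemma integral_comp_of_measurePreserving {T : α → α} (hT : MeasurePreserving T ρ ρ)
    {f : α → ℝ} (hf : AEStronglyMeasurable f ρ) : ∫ a, f (T a) ∂ρ = ∫ a, f a ∂ρ := by
  have hf' : AEStronglyMeasurable f (ρ.map T) := by rwa [hT.map_eq]
  rw [← integral_map hT.aemeasurable hf', hT.map_eq]

lemma _root_.MeasureTheory.MemLp.integrable_mul' {f h : α → ℝ} (hf : MemLp f 2 ρ)
    (hh : MemLp h 2 ρ) : Integrable (fun a => f a * h a) ρ :=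
  hf.integrable_mul hh

lemma integral_sub_comp_mul {T : α → α} (hT : MeasurePreserving T ρ ρ)
    (hinv : Function.Involutive T) {f h : α → ℝ} (hf : MemLp f 2 ρ) (hh : MemLp h 2 ρ) :
    ∫ a, (f (T a) - f a) * h a ∂ρ = ∫ a, f a * (h (T a) - h a) ∂ρ := by
  have hfT : MemLp (f ∘ T) 2 ρ := hf.comp_measurePreserving hT
  have hhT : MemLp (h ∘ T) 2 ρ := hh.comp_measurePreserving hT
  have cross : ∫ a, f (T a) * h a ∂ρ = ∫ a, f a * h (T a) ∂ρ := by
    have := integral_comp_of_measurePreserving hT (hf.integrable_mul hhT).aestronglyMeasurable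
    simpa only [Pi.mul_apply, Function.comp_apply, hinv _] using this
  calc ∫ a, (f (T a) - f a) * h a ∂ρ = ∫ a, f (T a) * h a ∂ρ - ∫ a, f a * h a ∂ρ := by
        simp only [sub_mul]; exact integral_sub (hfT.integrable_mul hh) (hf.integrable_mul hh)
    _ = ∫ a, f a * h (T a) ∂ρ - ∫ a, f a * h a ∂ρ := by rw [cross]
    _ = ∫ a, f a * (h (T a) - h a) ∂ρ := by
        simp only [mul_sub]
        exact (integral_sub (hf.integrable_mul hhT) (hf.integrable_mul hh)).symm

lemma hasSum_integral_of_support_subset {ι : Type*} {f : ι → α → ℝ} (s : Finset ι)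
    (hs : ∀ i ∉ s, ∀ a, f i a = 0) (hf : ∀ i ∈ s, Integrable (f i) ρ) :
    HasSum (fun i => ∫ a, f i a ∂ρ) (∫ a, ∑' i, f i a ∂ρ) := by
  have hsum : (fun a => ∑' i, f i a) = fun a => ∑ i ∈ s, f i a :=
    funext fun a => tsum_eq_sum fun i hi => hs i hi a
  rw [hsum, integral_finsetSum s hf]
  exact hasSum_sum_of_ne_finset_zero fun i hi => by simp [hs i hi]

end

def shift (x : ℤ) (ω : ℤ → ℝ) : ℤ → ℝ := fun z => ω (x + z)

lemma tau_eq_shift (x : ℤ) (f : (ℤ → ℝ) → (ℤ → ℝ) → ℝ) (m ω : ℤ → ℝ) :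
    tau x f m ω = f (shift x m) (shift x ω) := rfl

lemma shift_shift (x w : ℤ) (ω : ℤ → ℝ) : shift x (shift w ω) = shift (w + x) ω := by
  ext z; simp only [shift, add_assoc]

lemma shift_zero (ω : ℤ → ℝ) : shift 0 ω = ω := by
  ext z; simp [shift]

lemma flipAt_involutive (x : ℤ) : Function.Involutive (flipAt x) := by
  intro ω; ext z; by_cases h : z = x <;> simp [flipAt, Function.update_apply, h]

lemma exchAt_eq_comp_swap (x : ℤ) (ω : ℤ → ℝ) : exchAt x ω = ω ∘ Equiv.swap x (x + 1) := by
  ext z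
  simp only [exchAt, Function.comp_apply, Equiv.swap_apply_def]
  split_ifs <;> simp_all

lemma exchAt_involutive (x : ℤ) : Function.Involutive (exchAt x) := by
  intro ω; ext z; simp [exchAt_eq_comp_swap, Equiv.swap_apply_self]

lemma shift_flipAt (x : ℤ) (ω : ℤ → ℝ) : shift x (flipAt x ω) = flipAt 0 (shift x ω) := by
  ext z; by_cases h : z = 0 <;> simp [shift, flipAt, h]

lemma shift_exchAt (x : ℤ) (ω : ℤ → ℝ) : shift x (exchAt x ω) = exchAt 0 (shift x ω) := by
  ext z; simp only [shift, exchAt]; split_ifs <;> first | rfl | omega | simp_all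

lemma flipAt_apply_of_ne {x z : ℤ} (h : z ≠ x) (ω : ℤ → ℝ) : flipAt x ω z = ω z :=
  Function.update_of_ne h _ _

lemma exchAt_apply_of_ne {x z : ℤ} (h₀ : z ≠ x) (h₁ : z ≠ x + 1) (ω : ℤ → ℝ) :
    exchAt x ω z = ω z := by
  simp [exchAt, h₀, h₁]

lemma flipAt_apply_sq (x y : ℤ) (ω : ℤ → ℝ) : flipAt x ω y ^ 2 = ω y ^ 2 := by
  by_cases h : y = x <;> simp [flipAt, h]

lemma tsum_mul_exchAt_sq_sub (x : ℤ) (ω : ℤ → ℝ) :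
    ∑' y : ℤ, (y : ℝ) * (exchAt x ω y ^ 2 - ω y ^ 2) = ω x ^ 2 - ω (x + 1) ^ 2 := by
  rw [tsum_eq_sum (s := {x, x + 1}) fun y hy => by
    simp only [Finset.mem_insert, Finset.mem_singleton, not_or] at hy
    rw [exchAt_apply_of_ne hy.1 hy.2, sub_self, mul_zero]]
  rw [Finset.sum_pair (by omega)]
  simp only [exchAt, if_true, show x + 1 ≠ x by omega, if_false]
  push_cast; ring

lemma IsIIDProduct.eq_infinitePi {μ : Measure (ℤ → ℝ)} {κ : Measure ℝ} [IsProbabilityMeasure κ]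
    (hμ : IsIIDProduct μ κ) : μ = Measure.infinitePi fun _ => κ :=
  IsProjectiveLimit.unique hμ (Measure.isProjectiveLimit_infinitePi _)

lemma measurePreserving_comp_equiv_infinitePi {ι β : Type*} [MeasurableSpace β] (κ : Measure β)
    [IsProbabilityMeasure κ] (e : ι ≃ ι) :
    MeasurePreserving (fun ω : ι → β => ω ∘ e) (Measure.infinitePi fun _ => κ)
      (Measure.infinitePi fun _ => κ) := by
  refine ⟨by fun_prop, ?_⟩
  convert Measure.infinitePi_map_piCongrLeft (fun _ : ι => κ) e.symm using 2
  ext ω i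
  simp [MeasurableEquiv.coe_piCongrLeft, Equiv.piCongrLeft_apply_eq_cast]

lemma measurePreserving_flipAt_infinitePi (κ : Measure ℝ) [IsProbabilityMeasure κ]
    (hκ : κ.map (fun t => -t) = κ) (x : ℤ) :
    MeasurePreserving (flipAt x) (Measure.infinitePi fun _ => κ)
      (Measure.infinitePi fun _ => κ) := by
  classical
  let f : ℤ → ℝ → ℝ := fun i => if i = x then (fun t => -t) else id
  have hf : ∀ i, Measurable (f i) := fun i => by
    by_cases h : i = x <;> simp only [f, h, if_true, if_false] <;> fun_prop
  have hflip : flipAt x = fun ω i => f i (ω i) := by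
    ext ω i; by_cases h : i = x <;> simp [f, flipAt, h]
  refine ⟨by rw [hflip]; fun_prop, ?_⟩
  rw [hflip, Measure.infinitePi_map_pi _ hf]
  congr 1; ext1 i
  by_cases h : i = x <;> simp [f, h, hκ]

lemma memLp_sq_gaussianReal (v : NNReal) : MemLp (fun t : ℝ => t ^ 2) 2 (gaussianReal 0 v) := by
  have h4 : MemLp id 4 (gaussianReal 0 v) := memLp_id_gaussianReal' 4 (by norm_num)
  have : ENNReal.HolderTriple 4 4 2 := ⟨by
    rw [← two_mul, show (4 : ENNReal) = 2 * 2 by norm_num, ENNReal.mul_inv (by simp) (by simp),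
      ← mul_assoc, ENNReal.mul_inv_cancel (by simp) (by simp), one_mul]⟩
  simpa [sq] using h4.mul' h4

def IsShiftInvariant (ρ : Measure ((ℤ → ℝ) × (ℤ → ℝ))) : Prop :=
  ∀ x, MeasurePreserving (fun p => (shift x p.1, shift x p.2)) ρ ρ

structure IsLocalMove (ρ : Measure ((ℤ → ℝ) × (ℤ → ℝ))) (T : ℤ → (ℤ → ℝ) → ℤ → ℝ)
    (K : Finset ℤ) : Prop where
  involutive : ∀ x, Function.Involutive (T x)
  measurePreserving : ∀ x, MeasurePreserving (fun p => (p.1, T x p.2)) ρ ρ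
  shift_comm : ∀ x ω, shift x (T x ω) = T 0 (shift x ω)
  apply_of_notMem : ∀ ω, ∀ z ∉ K, T 0 ω z = ω z

section LocalMove

variable {ρ : Measure ((ℤ → ℝ) × (ℤ → ℝ))} {T : ℤ → (ℤ → ℝ) → ℤ → ℝ} {K t : Finset ℤ}
  {f g h : (ℤ → ℝ) → (ℤ → ℝ) → ℝ}

lemma IsShiftInvariant.memLp_tau (hρ : IsShiftInvariant ρ) (hf : MemLp (fun p => f p.1 p.2) 2 ρ)
    (x : ℤ) : MemLp (fun p => tau x f p.1 p.2) 2 ρ :=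
  hf.comp_measurePreserving (hρ x)

lemma IsLocalMove.memLp_comp (hT : IsLocalMove ρ T K) (hf : MemLp (fun p => f p.1 p.2) 2 ρ)
    (x : ℤ) : MemLp (fun p => f p.1 (T x p.2)) 2 ρ :=
  hf.comp_measurePreserving (hT.measurePreserving x)

lemma IsLocalMove.memLp_sub (hT : IsLocalMove ρ T K) (hf : MemLp (fun p => f p.1 p.2) 2 ρ)
    (x : ℤ) : MemLp (fun p => f p.1 (T x p.2) - f p.1 p.2) 2 ρ :=
  (hT.memLp_comp hf x).sub hf

lemma IsLocalMove.integral_sub_mul (hT : IsLocalMove ρ T K) (hf : MemLp (fun p => f p.1 p.2) 2 ρ)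
    (hh : MemLp (fun p => h p.1 p.2) 2 ρ) (x : ℤ) :
    ∫ p, (f p.1 (T x p.2) - f p.1 p.2) * h p.1 p.2 ∂ρ
      = ∫ p, f p.1 p.2 * (h p.1 (T x p.2) - h p.1 p.2) ∂ρ :=
  integral_sub_comp_mul (hT.measurePreserving x)
    (fun p => Prod.ext rfl (hT.involutive x p.2)) hf hh

lemma IsLocalMove.integral_sub_mul_tau (hT : IsLocalMove ρ T K) (hρ : IsShiftInvariant ρ)
    (hf : MemLp (fun p => f p.1 p.2) 2 ρ) (hg : MemLp (fun p => g p.1 p.2) 2 ρ) (x z : ℤ) :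
    ∫ p, (f p.1 (T x p.2) - f p.1 p.2) * tau z g p.1 p.2 ∂ρ
      = ∫ p, tau (-x) f p.1 p.2 * (tau (z - x) g p.1 (T 0 p.2) - tau (z - x) g p.1 p.2) ∂ρ := by
  rw [hT.integral_sub_mul hf (hρ.memLp_tau hg z)]
  have hint : Integrable (fun p => tau (-x) f p.1 p.2
      * (tau (z - x) g p.1 (T 0 p.2) - tau (z - x) g p.1 p.2)) ρ :=
    (hρ.memLp_tau hf (-x)).integrable_mul' (hT.memLp_sub (hρ.memLp_tau hg _) 0)
  rw [← integral_comp_of_measurePreserving (hρ x) hint.aestronglyMeasurable]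
  congr 1; ext p
  simp only [tau_eq_shift, ← hT.shift_comm, shift_shift, add_neg_cancel, shift_zero,
    add_sub_cancel]

lemma IsLocalMove.tau_apply_eq_of_notMem (hT : IsLocalMove ρ T K) (hg : CylOn g t) {w : ℤ}
    (hw : w ∉ Finset.image₂ (· - ·) K t) (m ω : ℤ → ℝ) :
    tau w g m (T 0 ω) = tau w g m ω := by
  refine hg _ _ _ _ (fun _ _ => rfl) fun i hi => hT.apply_of_notMem ω _ fun hK => hw ?_
  exact Finset.mem_image₂.mpr ⟨w + i, hK, i, hi, by ring⟩

lemma IsLocalMove.memLp_tsum_tau_sub (hT : IsLocalMove ρ T K) (hρ : IsShiftInvariant ρ)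
    (hgt : CylOn g t) (hg : MemLp (fun p => g p.1 p.2) 2 ρ) :
    MemLp (fun p => ∑' w, (tau w g p.1 (T 0 p.2) - tau w g p.1 p.2)) 2 ρ := by
  have hfin : ∀ p : (ℤ → ℝ) × (ℤ → ℝ), ∑' w, (tau w g p.1 (T 0 p.2) - tau w g p.1 p.2)
      = ∑ w ∈ Finset.image₂ (· - ·) K t, (tau w g p.1 (T 0 p.2) - tau w g p.1 p.2) := fun p =>
    tsum_eq_sum fun _ hw => by rw [hT.tau_apply_eq_of_notMem hgt hw, sub_self]
  simp only [hfin]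
  exact memLp_finsetSum _ fun w _ => hT.memLp_sub (hρ.memLp_tau hg w) 0

lemma IsLocalMove.hasSum_integral_sub_mul_tau (hT : IsLocalMove ρ T K) (hρ : IsShiftInvariant ρ)
    (hgt : CylOn g t) (hf : MemLp (fun p => f p.1 p.2) 2 ρ) (hg : MemLp (fun p => g p.1 p.2) 2 ρ)
    (x : ℤ) :
    HasSum (fun z => ∫ p, (f p.1 (T x p.2) - f p.1 p.2) * tau z g p.1 p.2 ∂ρ)
      (∫ p, tau (-x) f p.1 p.2 * ∑' w, (tau w g p.1 (T 0 p.2) - tau w g p.1 p.2) ∂ρ) := by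
  simp only [hT.integral_sub_mul_tau hρ hf hg x]
  simp only [← _root_.tsum_mul_left]
  refine ((Equiv.subRight x).hasSum_iff (f := fun w =>
    ∫ p, tau (-x) f p.1 p.2 * (tau w g p.1 (T 0 p.2) - tau w g p.1 p.2) ∂ρ)).mpr ?_
  refine hasSum_integral_of_support_subset (ρ := ρ) (Finset.image₂ (· - ·) K t)
    (fun w hw p => ?_) fun w _ => ?_
  · rw [hT.tau_apply_eq_of_notMem hgt hw, sub_self, mul_zero]
  · exact (hρ.memLp_tau hf (-x)).integrable_mul' (hT.memLp_sub (hρ.memLp_tau hg w) 0)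

lemma integral_flipAt_sub_mul_sq (hflip : IsLocalMove ρ flipAt K)
    (hf : MemLp (fun p => f p.1 p.2) 2 ρ) {y : ℤ} (hsq : MemLp (fun p => p.2 y ^ 2) 2 ρ)
    (x : ℤ) : ∫ p, (f p.1 (flipAt x p.2) - f p.1 p.2) * p.2 y ^ 2 ∂ρ = 0 := by
  rw [hflip.integral_sub_mul hf (h := fun _ ω => ω y ^ 2) hsq x]
  simp [flipAt_apply_sq]

lemma hasSum_mul_integral_exchAt_sub_mul_sq (hexch : IsLocalMove ρ exchAt K)
    (hρ : IsShiftInvariant ρ) (hf : MemLp (fun p => f p.1 p.2) 2 ρ)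
    (hsq : ∀ y, MemLp (fun p => p.2 y ^ 2) 2 ρ) (x : ℤ) :
    HasSum (fun y : ℤ => (y : ℝ) * ∫ p, (f p.1 (exchAt x p.2) - f p.1 p.2) * p.2 y ^ 2 ∂ρ)
      (∫ p, (p.2 0 ^ 2 - p.2 1 ^ 2) * tau (-x) f p.1 p.2 ∂ρ) := by
  have hint : Integrable (fun p => (p.2 0 ^ 2 - p.2 1 ^ 2) * tau (-x) f p.1 p.2) ρ :=
    ((hsq 0).sub (hsq 1)).integrable_mul' (hρ.memLp_tau hf (-x))
  have hshifted : ∫ p, (p.2 0 ^ 2 - p.2 1 ^ 2) * tau (-x) f p.1 p.2 ∂ρ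
      = ∫ p, (p.2 x ^ 2 - p.2 (x + 1) ^ 2) * f p.1 p.2 ∂ρ := by
    rw [← integral_comp_of_measurePreserving (hρ x) hint.aestronglyMeasurable]
    simp only [tau_eq_shift, shift_shift, add_neg_cancel, shift_zero]
    simp [shift]
  have hibp : ∀ y : ℤ, ∫ p, (f p.1 (exchAt x p.2) - f p.1 p.2) * p.2 y ^ 2 ∂ρ
      = ∫ p, f p.1 p.2 * (exchAt x p.2 y ^ 2 - p.2 y ^ 2) ∂ρ := fun y =>
    hexch.integral_sub_mul hf (h := fun _ ω => ω y ^ 2) (hsq y) x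
  have hpt : ∀ p : (ℤ → ℝ) × (ℤ → ℝ), (p.2 x ^ 2 - p.2 (x + 1) ^ 2) * f p.1 p.2
      = ∑' y : ℤ, (y : ℝ) * (f p.1 p.2 * (exchAt x p.2 y ^ 2 - p.2 y ^ 2)) := fun p => by
    rw [← tsum_mul_exchAt_sq_sub x p.2, ← _root_.tsum_mul_right]
    exact tsum_congr fun y => by ring
  rw [hshifted, integral_congr_ae (ae_of_all _ hpt)]
  convert hasSum_integral_of_support_subset (ρ := ρ) {x, x + 1} (fun y hy p => ?_) (fun y _ => ?_)
    using 1
  · ext y; rw [hibp, integral_const_mul]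
  · simp only [Finset.mem_insert, Finset.mem_singleton, not_or] at hy
    rw [exchAt_apply_of_ne hy.1 hy.2, sub_self, mul_zero, mul_zero]
  · exact (hf.integrable_mul' (hexch.memLp_sub (f := fun _ ω => ω y ^ 2) (hsq y) x)).const_mul _

variable {Λ : Finset ℤ} {F G : ℤ → (ℤ → ℝ) → (ℤ → ℝ) → ℝ}

lemma hasSum_mul_integral_sum_sub_mul_sq (hflip : IsLocalMove ρ flipAt {0})
    (hexch : IsLocalMove ρ exchAt {0, 1}) (hρ : IsShiftInvariant ρ)
    (hsq : ∀ y, MemLp (fun p => p.2 y ^ 2) 2 ρ)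
    (hF : ∀ x ∈ Λ, MemLp (fun p => F x p.1 p.2) 2 ρ)
    (hG : ∀ x ∈ Λ, MemLp (fun p => G x p.1 p.2) 2 ρ) :
    HasSum (fun y : ℤ => (y : ℝ) * ∫ p, (∑ x ∈ Λ, ((F x p.1 (flipAt x p.2) - F x p.1 p.2)
        + (G x p.1 (exchAt x p.2) - G x p.1 p.2))) * p.2 y ^ 2 ∂ρ)
      (∫ p, (p.2 0 ^ 2 - p.2 1 ^ 2) * ∑ x ∈ Λ, tau (-x) (G x) p.1 p.2 ∂ρ) := by
  have hsplit : ∀ y, ∫ p, (∑ x ∈ Λ, ((F x p.1 (flipAt x p.2) - F x p.1 p.2)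
        + (G x p.1 (exchAt x p.2) - G x p.1 p.2))) * p.2 y ^ 2 ∂ρ
      = ∑ x ∈ Λ, ∫ p, (G x p.1 (exchAt x p.2) - G x p.1 p.2) * p.2 y ^ 2 ∂ρ := fun y => by
    have hintF := fun x hx => (hflip.memLp_sub (hF x hx) x).integrable_mul' (hsq y)
    have hintG := fun x hx => (hexch.memLp_sub (hG x hx) x).integrable_mul' (hsq y)
    simp only [Finset.sum_mul, add_mul]
    refine (integral_finsetSum _ fun x hx => (hintF x hx).add (hintG x hx)).trans
      (Finset.sum_congr rfl fun x hx => ?_)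
    refine (integral_add (hintF x hx) (hintG x hx)).trans ?_
    rw [integral_flipAt_sub_mul_sq hflip (hF x hx) (hsq y), zero_add]
  have hsq01 : MemLp (fun p : (ℤ → ℝ) × (ℤ → ℝ) => p.2 0 ^ 2 - p.2 1 ^ 2) 2 ρ :=
    (hsq 0).sub (hsq 1)
  simp only [hsplit, Finset.mul_sum]
  rw [integral_finsetSum _ fun x hx => hsq01.integrable_mul' (hρ.memLp_tau (hG x hx) (-x))]
  exact hasSum_sum fun x hx => hasSum_mul_integral_exchAt_sub_mul_sq hexch hρ (hG x hx) hsq x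

lemma hasSum_integral_sum_sub_mul_tau (hflip : IsLocalMove ρ flipAt {0})
    (hexch : IsLocalMove ρ exchAt {0, 1}) (hρ : IsShiftInvariant ρ)
    (hF : ∀ x ∈ Λ, MemLp (fun p => F x p.1 p.2) 2 ρ)
    (hG : ∀ x ∈ Λ, MemLp (fun p => G x p.1 p.2) 2 ρ)
    (hgt : CylOn g t) (hg : MemLp (fun p => g p.1 p.2) 2 ρ) :
    HasSum (fun z => ∫ p, (∑ x ∈ Λ, ((F x p.1 (flipAt x p.2) - F x p.1 p.2)
        + (G x p.1 (exchAt x p.2) - G x p.1 p.2))) * tau z g p.1 p.2 ∂ρ)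
      (∫ p, grad0Gamma g p.1 p.2 * ∑ x ∈ Λ, tau (-x) (F x) p.1 p.2
        + grad01Gamma g p.1 p.2 * ∑ x ∈ Λ, tau (-x) (G x) p.1 p.2 ∂ρ) := by
  have hsplit : ∀ z, ∫ p, (∑ x ∈ Λ, ((F x p.1 (flipAt x p.2) - F x p.1 p.2)
        + (G x p.1 (exchAt x p.2) - G x p.1 p.2))) * tau z g p.1 p.2 ∂ρ
      = ∑ x ∈ Λ, (∫ p, (F x p.1 (flipAt x p.2) - F x p.1 p.2) * tau z g p.1 p.2 ∂ρ
        + ∫ p, (G x p.1 (exchAt x p.2) - G x p.1 p.2) * tau z g p.1 p.2 ∂ρ) := fun z => by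
    have hintF := fun x hx =>
      (hflip.memLp_sub (hF x hx) x).integrable_mul' (hρ.memLp_tau hg z)
    have hintG := fun x hx =>
      (hexch.memLp_sub (hG x hx) x).integrable_mul' (hρ.memLp_tau hg z)
    simp only [Finset.sum_mul, add_mul]
    exact (integral_finsetSum _ fun x hx => (hintF x hx).add (hintG x hx)).trans
      (Finset.sum_congr rfl fun x hx => integral_add (hintF x hx) (hintG x hx))
  have hrhs : ∫ p, grad0Gamma g p.1 p.2 * ∑ x ∈ Λ, tau (-x) (F x) p.1 p.2
        + grad01Gamma g p.1 p.2 * ∑ x ∈ Λ, tau (-x) (G x) p.1 p.2 ∂ρ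
      = ∑ x ∈ Λ, (∫ p, tau (-x) (F x) p.1 p.2 * grad0Gamma g p.1 p.2 ∂ρ
        + ∫ p, tau (-x) (G x) p.1 p.2 * grad01Gamma g p.1 p.2 ∂ρ) := by
    have hintF := fun x hx => (hρ.memLp_tau (hF x hx) (-x)).integrable_mul'
      (hflip.memLp_tsum_tau_sub hρ hgt hg)
    have hintG := fun x hx => (hρ.memLp_tau (hG x hx) (-x)).integrable_mul'
      (hexch.memLp_tsum_tau_sub hρ hgt hg)
    have hpt : ∀ p : (ℤ → ℝ) × (ℤ → ℝ), grad0Gamma g p.1 p.2 * ∑ x ∈ Λ, tau (-x) (F x) p.1 p.2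
          + grad01Gamma g p.1 p.2 * ∑ x ∈ Λ, tau (-x) (G x) p.1 p.2
        = ∑ x ∈ Λ, (tau (-x) (F x) p.1 p.2 * grad0Gamma g p.1 p.2
          + tau (-x) (G x) p.1 p.2 * grad01Gamma g p.1 p.2) := fun p => by
      rw [Finset.mul_sum, Finset.mul_sum, ← Finset.sum_add_distrib]
      exact Finset.sum_congr rfl fun _ _ => by ring
    rw [integral_congr_ae (ae_of_all _ hpt)]
    exact (integral_finsetSum _ fun x hx => (hintF x hx).add (hintG x hx)).trans
      (Finset.sum_congr rfl fun x hx => integral_add (hintF x hx) (hintG x hx))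
  rw [hrhs]
  simp only [hsplit]
  exact hasSum_sum fun x hx => (hflip.hasSum_integral_sub_mul_tau hρ hgt (hF x hx) hg x).add
    (hexch.hasSum_integral_sub_mul_tau hρ hgt (hG x hx) hg x)

end LocalMove

section ProductMeasure

variable (π : Measure (ℤ → ℝ)) (κ : Measure ℝ) [IsProbabilityMeasure κ]

lemma isShiftInvariant_infinitePi (ν : Measure ℝ) [IsProbabilityMeasure ν] :
    IsShiftInvariant ((Measure.infinitePi fun _ => ν).prod (Measure.infinitePi fun _ => κ)) :=
  fun x => (measurePreserving_comp_equiv_infinitePi ν (Equiv.addLeft x)).prod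
    (measurePreserving_comp_equiv_infinitePi κ (Equiv.addLeft x))

lemma isLocalMove_flipAt [SFinite π] (hκ : κ.map (fun t => -t) = κ) :
    IsLocalMove (π.prod (Measure.infinitePi fun _ => κ)) flipAt {0} where
  involutive := flipAt_involutive
  measurePreserving x :=
    (MeasurePreserving.id π).prod (measurePreserving_flipAt_infinitePi κ hκ x)
  shift_comm := shift_flipAt
  apply_of_notMem ω _ hz := flipAt_apply_of_ne (Finset.notMem_singleton.mp hz) ω

lemma isLocalMove_exchAt [SFinite π] :
    IsLocalMove (π.prod (Measure.infinitePi fun _ => κ)) exchAt {0, 1} where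
  involutive := exchAt_involutive
  measurePreserving x := by
    rw [show exchAt x = fun ω => ω ∘ Equiv.swap x (x + 1) from funext (exchAt_eq_comp_swap x)]
    exact (MeasurePreserving.id π).prod (measurePreserving_comp_equiv_infinitePi κ _)
  shift_comm := shift_exchAt
  apply_of_notMem ω z hz := by
    simp only [Finset.mem_insert, Finset.mem_singleton, not_or] at hz
    exact exchAt_apply_of_ne hz.1 (by simpa using hz.2) ω

lemma memLp_sq_infinitePi_gaussianReal [IsProbabilityMeasure π] (v : NNReal) (y : ℤ) :
    MemLp (fun p : (ℤ → ℝ) × (ℤ → ℝ) => p.2 y ^ 2) 2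
      (π.prod (Measure.infinitePi fun _ => gaussianReal 0 v)) :=
  (memLp_sq_gaussianReal v).comp_measurePreserving
    ((measurePreserving_eval_infinitePi _ y).comp measurePreserving_snd)

end ProductMeasure

end DisorderedChain

open DisorderedChain

theorem stmt7_general
    (ν : Measure ℝ) [IsProbabilityMeasure ν]
    (P : Measure (ℤ → ℝ)) (hP : IsIIDProduct P ν)
    (β : ℝ)
    (μ : Measure (ℤ → ℝ))
    (hμ : IsIIDProduct μ (gaussianReal 0 (Real.toNNReal β⁻¹)))
    (Λ : Finset ℤ)
    (F G : ℤ → (ℤ → ℝ) → (ℤ → ℝ) → ℝ)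
    (hF2 : ∀ x ∈ Λ, MemLp (fun p : (ℤ → ℝ) × (ℤ → ℝ) => F x p.1 p.2) 2 (P.prod μ))
    (hG2 : ∀ x ∈ Λ, MemLp (fun p : (ℤ → ℝ) × (ℤ → ℝ) => G x p.1 p.2) 2 (P.prod μ))
    (φ : (ℤ → ℝ) → (ℤ → ℝ) → ℝ)
    (hφ : φ = fun m ω => ∑ x ∈ Λ,
      ((F x m (flipAt x ω) - F x m ω) + (G x m (exchAt x ω) - G x m ω))) :
    (∑' y : ℤ, (y : ℝ) * Estar P μ (fun m ω => φ m ω * ω y ^ 2)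
        = Estar P μ (fun m ω => (ω 0 ^ 2 - ω 1 ^ 2) * ∑ x ∈ Λ, tau (-x) (G x) m ω))
    ∧ ∀ g : (ℤ → ℝ) → (ℤ → ℝ) → ℝ, (∃ t : Finset ℤ, CylOn g t) →
        MemLp (fun p : (ℤ → ℝ) × (ℤ → ℝ) => g p.1 p.2) 2 (P.prod μ) →
        ∑' z : ℤ, Estar P μ (fun m ω => φ m ω * tau z g m ω)
          = Estar P μ (fun m ω =>
              grad0Gamma g m ω * ∑ x ∈ Λ, tau (-x) (F x) m ω
                + grad01Gamma g m ω * ∑ x ∈ Λ, tau (-x) (G x) m ω) := by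
  obtain rfl := hP.eq_infinitePi
  obtain rfl := hμ.eq_infinitePi
  subst hφ
  set κ := gaussianReal 0 (Real.toNNReal β⁻¹)
  have hflip := isLocalMove_flipAt (Measure.infinitePi fun _ => ν) κ
    (by rw [gaussianReal_map_neg, neg_zero])
  have hexch := isLocalMove_exchAt (Measure.infinitePi fun _ => ν) κ
  have hρ := isShiftInvariant_infinitePi κ ν
  refine ⟨(hasSum_mul_integral_sum_sub_mul_sq hflip hexch hρ
      (memLp_sq_infinitePi_gaussianReal _ _) hF2 hG2).tsum_eq, ?_⟩
  rintro g ⟨t, hgt⟩ hg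
  exact (hasSum_integral_sum_sub_mul_tau hflip hexch hρ hF2 hG2 hgt hg).tsum_eq

/-- explicit formulas for `≪φ≫_⋆⋆` and `≪φ, g≫_⋆` when
`φ = Σ_{x∈Λ} (∇_x F_x + ∇_{x,x+1} G_x)`. -/
theorem stmt7 (gam lam : ℝ) (hgam : 0 < gam) (hlam : 0 < lam)
    (C : ℝ) (hC : 1 < C)
    (ν : Measure ℝ) [IsProbabilityMeasure ν] (hν : ν (Set.Icc C⁻¹ C)ᶜ = 0)
    (P : Measure (ℤ → ℝ)) [IsProbabilityMeasure P] (hP : IsIIDProduct P ν)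
    (β : ℝ) (hβ : 0 < β)
    (μ : Measure (ℤ → ℝ)) [IsProbabilityMeasure μ]
    (hμ : IsIIDProduct μ (gaussianReal 0 (Real.toNNReal β⁻¹)))
    (Λ : Finset ℤ)
    (F G : ℤ → (ℤ → ℝ) → (ℤ → ℝ) → ℝ)
    (hF2 : ∀ x ∈ Λ, MemLp (fun p : (ℤ → ℝ) × (ℤ → ℝ) => F x p.1 p.2) 2 (P.prod μ))
    (hG2 : ∀ x ∈ Λ, MemLp (fun p : (ℤ → ℝ) × (ℤ → ℝ) => G x p.1 p.2) 2 (P.prod μ))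
    (hFcyl : ∀ x ∈ Λ, ∃ t : Finset ℤ, CylOn (F x) t)
    (hGcyl : ∀ x ∈ Λ, ∃ t : Finset ℤ, CylOn (G x) t)
    (φ : (ℤ → ℝ) → (ℤ → ℝ) → ℝ)
    (hφ : φ = fun m ω => ∑ x ∈ Λ,
      ((F x m (flipAt x ω) - F x m ω) + (G x m (exchAt x ω) - G x m ω))) :
    (∑' y : ℤ, (y : ℝ) * Estar P μ (fun m ω => φ m ω * ω y ^ 2)
        = Estar P μ (fun m ω => (ω 0 ^ 2 - ω 1 ^ 2) * ∑ x ∈ Λ, tau (-x) (G x) m ω))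
    ∧ ∀ g : (ℤ → ℝ) → (ℤ → ℝ) → ℝ, (∃ t : Finset ℤ, CylOn g t) →
        MemLp (fun p : (ℤ → ℝ) × (ℤ → ℝ) => g p.1 p.2) 2 (P.prod μ) →
        ∑' z : ℤ, Estar P μ (fun m ω => φ m ω * tau z g m ω)
          = Estar P μ (fun m ω =>
              grad0Gamma g m ω * ∑ x ∈ Λ, tau (-x) (F x) m ω
                + grad01Gamma g m ω * ∑ x ∈ Λ, tau (-x) (G x) m ω) :=
  stmt7_general ν P hP β μ hμ Λ F G hF2 hG2 φ hφ
end
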